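/- arXiv:1207.1589 — 2 statements merged into one kernel-verified Lean document; each statement's English description precedes it below -/
import Mathlib

section
/- Let X be a topological space. The space C(X) of continuous real-valued functions on X, equipped with the graph topology τ_Γ and with pointwise addition, is a topological group. -/
open TopologicalSpace Set

/-- The graph of a continuous map, as a subset of `X × Y`. -/
def graphSet {X Y : Type*} [TopologicalSpace X] [TopologicalSpace Y] (f : C(X, Y)) :
    Set (X × Y) := {p | p.2 = f p.1}

/-- The graph topology `τ_Γ` on `C(X, Y)`, generated by the sets
`F_G = {f | graph f ⊆ G}` for `G` open in `X × Y`. -/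
def graphTopology (X Y : Type*) [TopologicalSpace X] [TopologicalSpace Y] :
    TopologicalSpace C(X, Y) :=
  generateFrom {S | ∃ G : Set (X × Y), IsOpen G ∧ S = {f : C(X, Y) | graphSet f ⊆ G}}

/-!
Translations and negation act on graphs through fibrewise homeomorphisms of `X × ℝ`, so they are
continuous. For continuity of addition at `(0, 0)`, shrink an open `G ⊇ X × {0}` to
`U = ⋃ₓ Vₓ × (-εₓ, εₓ)` with `Vₓ × (-2εₓ, 2εₓ) ⊆ G`: if `(y, s)` and `(y, t)` lie in `U`, both lie
in the piece with the larger `ε`, so `(y, s + t) ∈ G`. Hence `F_U + F_U ⊆ F_G`.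
-/

open Filter Metric Topology

section GraphTopology

variable {X Y Z : Type*} [TopologicalSpace X] [TopologicalSpace Y] [TopologicalSpace Z]

lemma graphSet_subset_iff {f : C(X, Y)} {G : Set (X × Y)} :
    graphSet f ⊆ G ↔ ∀ x, (x, f x) ∈ G :=
  ⟨fun h x => h rfl, by rintro h ⟨x, y⟩ (rfl : y = f x); exact h x⟩

lemma isOpen_setOf_graphSet_subset {G : Set (X × Y)} (hG : IsOpen G) :
    IsOpen[graphTopology X Y] {f : C(X, Y) | graphSet f ⊆ G} :=
  isOpen_generateFrom_of_mem ⟨G, hG, rfl⟩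

lemma mem_nhds_zero_setOf_graphSet_subset {E : Type*} [TopologicalSpace E] [Zero E]
    {G : Set (X × E)} (hG : IsOpen G) (h0 : ∀ x, (x, (0 : E)) ∈ G) :
    {f : C(X, E) | graphSet f ⊆ G} ∈ @nhds _ (graphTopology X E) 0 :=
  @IsOpen.mem_nhds _ (graphTopology X E) _ _ (isOpen_setOf_graphSet_subset hG)
    (graphSet_subset_iff.2 h0)

lemma continuous_graphTopology_of_apply_eq {ψ : X × Y → Z} (hψ : Continuous ψ)
    {T : C(X, Y) → C(X, Z)} (hT : ∀ f x, T f x = ψ (x, f x)) :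
    Continuous[graphTopology X Y, graphTopology X Z] T := by
  refine continuous_generateFrom_iff.2 ?_
  rintro _ ⟨G, hG, rfl⟩
  have hφ : Continuous fun p : X × Y => (p.1, ψ p) := by fun_prop
  convert isOpen_setOf_graphSet_subset (hG.preimage hφ) using 1
  ext f
  simp only [mem_preimage, mem_ofPred_eq, graphSet_subset_iff, hT]

lemma separatelyContinuousAdd_graphTopology [Add Y] [ContinuousAdd Y] :
    @SeparatelyContinuousAdd C(X, Y) (graphTopology X Y) _ :=
  @SeparatelyContinuousAdd.mk _ (graphTopology X Y) _
    (fun {h} => continuous_graphTopology_of_apply_eq (ψ := fun p => h p.1 + p.2) (by fun_prop)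
      fun _ _ => rfl)
    (fun {h} => continuous_graphTopology_of_apply_eq (ψ := fun p => p.2 + h p.1) (by fun_prop)
      fun _ _ => rfl)

lemma continuous_neg_graphTopology [Neg Y] [ContinuousNeg Y] :
    Continuous[graphTopology X Y, graphTopology X Y] fun f : C(X, Y) => -f :=
  continuous_graphTopology_of_apply_eq (ψ := fun p => -p.2) (by fun_prop) fun _ _ => rfl

end GraphTopology

section Seminormed

variable {X E : Type*} [TopologicalSpace X] [SeminormedAddCommGroup E]

lemma exists_isOpen_zero_mem_add_mem {G : Set (X × E)} (hG : IsOpen G)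
    (h0 : ∀ x, (x, (0 : E)) ∈ G) :
    ∃ U : Set (X × E), IsOpen U ∧ (∀ x, (x, (0 : E)) ∈ U) ∧
      ∀ x s t, (x, s) ∈ U → (x, t) ∈ U → (x, s + t) ∈ G := by
  have hloc : ∀ x, ∃ V : Set X, ∃ ε > 0, IsOpen V ∧ x ∈ V ∧ V ×ˢ ball (0 : E) (2 * ε) ⊆ G := by
    intro x
    obtain ⟨u, v, hu, hv, hxu, h0v, huv⟩ := isOpen_prod_iff.1 hG x 0 (h0 x)
    obtain ⟨ε, hε, hball⟩ := Metric.isOpen_iff.1 hv 0 h0v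
    refine ⟨u, ε / 2, half_pos hε, hu, hxu, ?_⟩
    rw [mul_div_cancel₀ _ two_ne_zero]
    exact (prod_mono_right hball).trans huv
  choose V ε hε hV hxV hVG using hloc
  have hsum : ∀ c y s t, y ∈ V c → ‖s‖ < ε c → ‖t‖ < ε c → (y, s + t) ∈ G := fun c y s t hy hs ht =>
    hVG c ⟨hy, mem_ball_zero_iff.2 <| (norm_add_le s t).trans_lt (by linarith)⟩
  refine ⟨⋃ x, V x ×ˢ ball 0 (ε x), isOpen_iUnion fun x => (hV x).prod isOpen_ball,
    fun x => mem_iUnion.2 ⟨x, hxV x, mem_ball_self (hε x)⟩, ?_⟩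
  intro y s t hs ht
  simp only [mem_iUnion, mem_prod, mem_ball_zero_iff] at hs ht
  obtain ⟨a, hya, hs⟩ := hs
  obtain ⟨b, hyb, ht⟩ := ht
  rcases le_total (ε a) (ε b) with hab | hba
  · exact hsum b y s t hyb (hs.trans_le hab) ht
  · exact hsum a y s t hya hs (ht.trans_le hba)

lemma tendsto_add_zero_graphTopology :
    Tendsto (fun p : C(X, E) × C(X, E) => p.1 + p.2)
      (@nhds _ (graphTopology X E) 0 ×ˢ @nhds _ (graphTopology X E) 0)
      (@nhds _ (graphTopology X E) 0) := by
  refine tendsto_nhds_generateFrom_iff.2 ?_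
  rintro _ ⟨G, hG, rfl⟩ hG0
  obtain ⟨U, hU, hU0, hUG⟩ := exists_isOpen_zero_mem_add_mem hG (graphSet_subset_iff.1 hG0)
  have hFU := mem_nhds_zero_setOf_graphSet_subset hU hU0
  filter_upwards [prod_mem_prod hFU hFU] with ⟨f, g⟩ ⟨hf, hg⟩
  exact graphSet_subset_iff.2 fun x =>
    hUG x (f x) (g x) (graphSet_subset_iff.1 hf x) (graphSet_subset_iff.1 hg x)

end Seminormed

/-- `(C(X), τ_Γ)` with pointwise addition is a topological group. -/
theorem topologicalAddGroup_graphTopology (X : Type*) [TopologicalSpace X] :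
    @IsTopologicalAddGroup C(X, ℝ) (graphTopology X ℝ) _ := by
  let := graphTopology X ℝ
  have : SeparatelyContinuousAdd C(X, ℝ) := separatelyContinuousAdd_graphTopology
  refine IsTopologicalAddGroup.of_comm_of_nhds_zero tendsto_add_zero_graphTopology ?_
    fun f => by simpa [← Filter.map_vadd] using nhds_vadd f (0 : C(X, ℝ))
  simpa using (continuous_neg_graphTopology (X := X) (Y := ℝ)).tendsto 0
end

section
/- Let X be a topological space. Then the space C(X) of continuous real-valued functions on X, equipped with the graph topology τ_Γ, is a Baire space: the intersection of every countable family of dense open subsets of (C(X), τ_Γ) is dense. -/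
open TopologicalSpace Set

/-!
Every `τ_Γ`-neighbourhood of `f` contains a basic set `{h | graph h ⊆ tube f ε}` whose radius
`ε > 0` is only lower semicontinuous: it is the supremum of the radii of the fibrewise balls
around `f x` that stay in the given open set, and the tube lemma (closed balls are compact) makes
it lower semicontinuous. Given dense open sets `D n`, one then picks centres `f n ∈ D n` and radii
`ε n ≤ 2⁻ⁿ` with nested closed tubes. The `f n` converge uniformly, and the graph of the continuous
limit lies in every closed tube, so the limit lies in the starting open set and in every `D n`.
-/

open Filter Topology

section GraphTopology

variable {X Y : Type*} [TopologicalSpace X] [TopologicalSpace Y]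

theorem isTopologicalBasis_graphTopology :
    @IsTopologicalBasis C(X, Y) (graphTopology X Y)
      {S | ∃ G : Set (X × Y), IsOpen G ∧ S = {f : C(X, Y) | graphSet f ⊆ G}} :=
  @isTopologicalBasis_of_subbasis_of_finiteInter _ (graphTopology X Y) _ rfl
    { univ_mem := ⟨univ, isOpen_univ, by simp⟩
      inter_mem := by
        rintro _ ⟨G, hG, rfl⟩ _ ⟨G', hG', rfl⟩
        exact ⟨G ∩ G', hG.inter hG', by ext; simp [subset_inter_iff]⟩ }

theorem isOpen_graphTopology_setOf_graphSet_subset {G : Set (X × Y)} (hG : IsOpen G) :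
    IsOpen[graphTopology X Y] {f | graphSet f ⊆ G} :=
  isOpen_generateFrom_of_mem ⟨G, hG, rfl⟩

theorem exists_graphSet_subset_of_isOpen_graphTopology {U : Set C(X, Y)}
    (hU : IsOpen[graphTopology X Y] U) {f : C(X, Y)} (hf : f ∈ U) :
    ∃ G : Set (X × Y), IsOpen G ∧ graphSet f ⊆ G ∧ ∀ h : C(X, Y), graphSet h ⊆ G → h ∈ U := by
  let := graphTopology X Y
  obtain ⟨_, ⟨G, hG, rfl⟩, hfG, hGU⟩ :=
    isTopologicalBasis_graphTopology.exists_subset_of_mem_open hf hU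
  exact ⟨G, hG, hfG, fun h hh => hGU hh⟩

end GraphTopology

section Tubes

variable {X Y : Type*} [TopologicalSpace X] [PseudoMetricSpace Y]

def tube (f : C(X, Y)) (ε : X → ℝ) : Set (X × Y) := {p | dist p.2 (f p.1) < ε p.1}

def closedTube (f : C(X, Y)) (ε : X → ℝ) : Set (X × Y) := {p | dist p.2 (f p.1) ≤ ε p.1}

theorem graphSet_subset_tube (f : C(X, Y)) {ε : X → ℝ} (hε : ∀ x, 0 < ε x) :
    graphSet f ⊆ tube f ε := by
  rintro ⟨x, y⟩ (rfl : y = f x)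
  simpa [tube] using hε x

theorem graphSet_subset_closedTube_iff {f g : C(X, Y)} {ε : X → ℝ} :
    graphSet g ⊆ closedTube f ε ↔ ∀ x, dist (g x) (f x) ≤ ε x :=
  ⟨fun h x => h (show (x, g x) ∈ graphSet g from rfl), by
    rintro h ⟨x, y⟩ (rfl : y = g x)
    exact h x⟩

theorem closedTube_subset_tube (f : C(X, Y)) {δ ε : X → ℝ} (h : ∀ x, δ x < ε x) :
    closedTube f δ ⊆ tube f ε :=
  fun p hp => lt_of_le_of_lt hp (h p.1)

theorem tube_subset_closedTube (f : C(X, Y)) (ε : X → ℝ) : tube f ε ⊆ closedTube f ε :=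
  fun p (hp : dist p.2 (f p.1) < ε p.1) => hp.le

theorem LowerSemicontinuous.isOpen_tube {ε : X → ℝ} (hε : LowerSemicontinuous ε)
    (f : C(X, Y)) : IsOpen (tube f ε) := by
  have : LowerSemicontinuous fun p : X × Y => ε p.1 + -dist p.2 (f p.1) :=
    (hε.comp continuous_fst).add
      (continuous_snd.dist (f.continuous.comp continuous_fst)).neg.lowerSemicontinuous
  convert this.isOpen_preimage 0 using 1
  ext p
  simp [tube, ← sub_eq_add_neg, sub_pos]

/-- Capped at `1`, since `sSup` of an unbounded set of reals is junk. -/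
noncomputable def tubeRadius (f : C(X, Y)) (G : Set (X × Y)) (x : X) : ℝ :=
  sSup {r | r ∈ Icc 0 1 ∧ ∀ y, dist y (f x) < r → (x, y) ∈ G}

theorem le_tubeRadius {f : C(X, Y)} {G : Set (X × Y)} {x : X} {r : ℝ} (hr : r ∈ Icc 0 1)
    (hrG : ∀ y, dist y (f x) < r → (x, y) ∈ G) : r ≤ tubeRadius f G x :=
  le_csSup ⟨1, fun _ hs => hs.1.2⟩ ⟨hr, hrG⟩

theorem exists_lt_of_lt_tubeRadius {f : C(X, Y)} {G : Set (X × Y)} {x : X} {c : ℝ}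
    (hc : c < tubeRadius f G x) :
    ∃ r ≤ 1, c < r ∧ ∀ y, dist y (f x) < r → (x, y) ∈ G := by
  have hzero : ∀ y, dist y (f x) < 0 → (x, y) ∈ G := fun _ hy => absurd hy dist_nonneg.not_gt
  obtain ⟨r, ⟨hr, hrG⟩, hcr⟩ := exists_lt_of_lt_csSup (by exact ⟨0, by simp, hzero⟩) hc
  exact ⟨r, hr.2, hcr, hrG⟩

theorem tubeRadius_nonneg (f : C(X, Y)) (G : Set (X × Y)) (x : X) : 0 ≤ tubeRadius f G x :=
  le_tubeRadius (by simp) fun _ hy => absurd hy dist_nonneg.not_gt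

theorem tube_tubeRadius_subset (f : C(X, Y)) (G : Set (X × Y)) : tube f (tubeRadius f G) ⊆ G := by
  rintro ⟨x, y⟩ hy
  obtain ⟨r, -, hyr, hrG⟩ := exists_lt_of_lt_tubeRadius hy
  exact hrG y hyr

theorem tubeRadius_pos {f : C(X, Y)} {G : Set (X × Y)} (hG : IsOpen G) (hfG : graphSet f ⊆ G)
    (x : X) : 0 < tubeRadius f G x := by
  obtain ⟨r, hr, hrG⟩ :=
    Metric.isOpen_iff.1 (hG.preimage (Continuous.prodMk_right x)) (f x) (hfG rfl)
  refine (lt_min hr one_pos).trans_le (le_tubeRadius ⟨by positivity, min_le_right _ _⟩ ?_)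
  exact fun y hy => hrG (Metric.mem_ball.2 (hy.trans_le (min_le_left _ _)))

theorem lowerSemicontinuous_tubeRadius [ProperSpace Y] (f : C(X, Y)) {G : Set (X × Y)}
    (hG : IsOpen G) : LowerSemicontinuous (tubeRadius f G) := by
  intro x₀ c hc
  rcases lt_or_ge c 0 with hc0 | hc0
  · exact Eventually.of_forall fun x => hc0.trans_le (tubeRadius_nonneg f G x)
  obtain ⟨r, hr1, hcr, hrG⟩ := exists_lt_of_lt_tubeRadius hc
  obtain ⟨s, hcs, hsr⟩ := exists_between hcr
  obtain ⟨t, hct, hts⟩ := exists_between hcs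
  obtain ⟨u, v, hu, -, hx₀u, hballv, huvG⟩ :=
    generalized_tube_lemma isCompact_singleton (isCompact_closedBall (f x₀) s) hG
      (by
        rintro ⟨x, y⟩ ⟨rfl, hy⟩
        exact hrG y ((Metric.mem_closedBall.1 hy).trans_lt hsr))
  filter_upwards [hu.mem_nhds (hx₀u rfl),
    f.continuous.continuousAt.preimage_mem_nhds (Metric.ball_mem_nhds (f x₀) (sub_pos.2 hts))]
    with x hxu hfx
  refine hct.trans_le (le_tubeRadius ⟨by linarith, by linarith⟩ fun y hy => huvG ⟨hxu, hballv ?_⟩)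
  calc dist y (f x₀) ≤ dist y (f x) + dist (f x) (f x₀) := dist_triangle _ _ _
    _ ≤ s := by linarith [Metric.mem_ball.1 hfx]

theorem exists_closedTube_subset [ProperSpace Y] {U : Set C(X, Y)}
    (hU : IsOpen[graphTopology X Y] U) {f : C(X, Y)} (hf : f ∈ U) {W : Set (X × Y)}
    (hW : IsOpen W) (hfW : graphSet f ⊆ W) {r : ℝ} (hr : 0 < r) :
    ∃ ε : X → ℝ, LowerSemicontinuous ε ∧ (∀ x, 0 < ε x) ∧ (∀ x, ε x ≤ r) ∧
      closedTube f ε ⊆ W ∧ ∀ h : C(X, Y), graphSet h ⊆ closedTube f ε → h ∈ U := by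
  obtain ⟨G, hG, hfG, hGU⟩ := exists_graphSet_subset_of_isOpen_graphTopology hU hf
  have hGW : IsOpen (G ∩ W) := hG.inter hW
  have hρ := lowerSemicontinuous_tubeRadius f hGW
  have hρpos := tubeRadius_pos hGW (subset_inter hfG hfW)
  have hsub : closedTube f (fun x => min (tubeRadius f (G ∩ W) x / 2) r) ⊆ G ∩ W :=
    (closedTube_subset_tube f fun x => (min_le_left _ _).trans_lt (half_lt_self (hρpos x))).trans
      (tube_tubeRadius_subset f _)
  refine ⟨fun x => min (tubeRadius f (G ∩ W) x / 2) r, ?_, fun x => lt_min (half_pos (hρpos x)) hr,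
    fun x => min_le_right _ _, hsub.trans inter_subset_right,
    fun h hh => hGU h (hh.trans (hsub.trans inter_subset_left))⟩
  exact ((continuous_id.div_const 2).comp_lowerSemicontinuous hρ
    fun _ _ h => div_le_div_of_nonneg_right h zero_le_two).inf lowerSemicontinuous_const

theorem exists_forall_graphSet_subset_closedTube [CompleteSpace Y] (f : ℕ → C(X, Y))
    (ε : ℕ → X → ℝ) {u : ℕ → ℝ} (hu : Tendsto u atTop (𝓝 0)) (hε₀ : ∀ n x, 0 ≤ ε n x)
    (hεu : ∀ n x, ε n x ≤ u n)
    (hnest : ∀ n, closedTube (f (n + 1)) (ε (n + 1)) ⊆ closedTube (f n) (ε n)) :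
    ∃ g : C(X, Y), ∀ n, graphSet g ⊆ closedTube (f n) (ε n) := by
  have hdist : ∀ m n x, m ≤ n → dist (f n x) (f m x) ≤ ε m x := fun m n x hmn =>
    antitone_nat_of_succ_le (f := fun n => closedTube (f n) (ε n)) hnest hmn
      (show (x, f n x) ∈ closedTube (f n) (ε n) by simpa [closedTube] using hε₀ n x)
  have hcauchy : ∀ x, CauchySeq fun n => f n x := fun x =>
    cauchySeq_of_le_tendsto_0' u (fun m n hmn => by
      rw [dist_comm]; exact (hdist m n x hmn).trans (hεu m x)) hu
  choose g hg using fun x => cauchySeq_tendsto_of_complete (hcauchy x)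
  have hgε : ∀ m x, dist (g x) (f m x) ≤ ε m x := fun m x =>
    le_of_tendsto ((hg x).dist tendsto_const_nhds)
      (eventually_atTop.2 ⟨m, fun n hn => hdist m n x hn⟩)
  have hunif : TendstoUniformly (fun n x => f n x) g atTop :=
    Metric.tendstoUniformly_iff.2 fun δ hδ => (hu.eventually (gt_mem_nhds hδ)).mono
      fun n hn x => (hgε n x).trans_lt ((hεu n x).trans_lt hn)
  exact ⟨⟨g, hunif.continuous (Frequently.of_forall fun n => (f n).continuous)⟩,
    fun n => graphSet_subset_closedTube_iff.2 (hgε n)⟩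

end Tubes

section Baire

variable {X Y : Type*} [TopologicalSpace X] [PseudoMetricSpace Y] [ProperSpace Y]

theorem exists_nested_closedTubes {U : Set C(X, Y)} (hU : IsOpen[graphTopology X Y] U)
    (hU₀ : U.Nonempty) {D : ℕ → Set C(X, Y)} (hDo : ∀ n, IsOpen[graphTopology X Y] (D n))
    (hDd : ∀ n, @Dense _ (graphTopology X Y) (D n)) :
    ∃ (f : ℕ → C(X, Y)) (ε : ℕ → X → ℝ), (∀ n x, 0 ≤ ε n x) ∧ (∀ n x, ε n x ≤ (1 / 2) ^ n) ∧
      (∀ n, closedTube (f (n + 1)) (ε (n + 1)) ⊆ closedTube (f n) (ε n)) ∧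
      (∀ h, graphSet h ⊆ closedTube (f 0) (ε 0) → h ∈ U) ∧
      ∀ n h, graphSet h ⊆ closedTube (f (n + 1)) (ε (n + 1)) → h ∈ D n := by
  let := graphTopology X Y
  obtain ⟨f₀, hf₀⟩ := hU₀
  obtain ⟨ε₀, hε₀, hε₀pos, hε₀le, -, hε₀U⟩ :=
    exists_closedTube_subset hU hf₀ isOpen_univ (subset_univ _) one_pos
  have step : ∀ n (t : {p : C(X, Y) × (X → ℝ) // LowerSemicontinuous p.2 ∧ ∀ x, 0 < p.2 x}),
      ∃ t' : {p : C(X, Y) × (X → ℝ) // LowerSemicontinuous p.2 ∧ ∀ x, 0 < p.2 x},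
        (∀ x, t'.1.2 x ≤ (1 / 2) ^ (n + 1)) ∧
        closedTube t'.1.1 t'.1.2 ⊆ closedTube t.1.1 t.1.2 ∧
        ∀ h, graphSet h ⊆ closedTube t'.1.1 t'.1.2 → h ∈ D n := by
    rintro n ⟨⟨f, ε⟩, hε, hεpos⟩
    obtain ⟨g, hgT, hgD⟩ := (hDd n).inter_open_nonempty _
      (isOpen_graphTopology_setOf_graphSet_subset (hε.isOpen_tube f))
      ⟨f, graphSet_subset_tube f hεpos⟩
    obtain ⟨δ, hδ, hδpos, hδle, hδT, hδD⟩ :=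
      exists_closedTube_subset (hDo n) hgD (hε.isOpen_tube f) hgT
        (r := (1 / 2) ^ (n + 1)) (by positivity)
    exact ⟨⟨(g, δ), hδ, hδpos⟩, hδle, hδT.trans (tube_subset_closedTube f ε), hδD⟩
  choose next hnext using step
  let t : ℕ → {p : C(X, Y) × (X → ℝ) // LowerSemicontinuous p.2 ∧ ∀ x, 0 < p.2 x} :=
    fun n => Nat.rec ⟨(f₀, ε₀), hε₀, hε₀pos⟩ next n
  refine ⟨fun n => (t n).1.1, fun n => (t n).1.2, fun n x => ((t n).2.2 x).le, ?_,
    fun n => (hnext n (t n)).2.1, hε₀U, fun n => (hnext n (t n)).2.2⟩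
  rintro (_ | n) x
  · simpa [t] using hε₀le x
  · exact (hnext n (t n)).1 x

theorem baireSpace_graphTopology_of_properSpace : @BaireSpace C(X, Y) (graphTopology X Y) := by
  let := graphTopology X Y
  refine ⟨fun D hDo hDd => dense_iff_inter_open.2 fun U hU hU₀ => ?_⟩
  obtain ⟨f, ε, hε₀, hεu, hnest, hUf, hDf⟩ := exists_nested_closedTubes hU hU₀ hDo hDd
  obtain ⟨g, hg⟩ := exists_forall_graphSet_subset_closedTube f ε
    (tendsto_pow_atTop_nhds_zero_of_lt_one (by norm_num) (by norm_num)) hε₀ hεu hnest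
  exact ⟨g, hUf g (hg 0), mem_iInter.2 fun n => hDf n g (hg (n + 1))⟩

end Baire

/-- `(C(X), τ_Γ)` is a Baire space: every countable intersection of
dense open sets is dense. -/
theorem baireSpace_graphTopology (X : Type*) [TopologicalSpace X] :
    @BaireSpace C(X, ℝ) (graphTopology X ℝ) :=
  baireSpace_graphTopology_of_properSpace
end
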